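/- arXiv:2204.08947 — 4 statements merged into one kernel-verified Lean document; each statement's English description precedes it below -/
import Mathlib

section
/- Let ε be the sl3 quadrilateral exchange matrix, and set ε⁽¹⁾ := μ₁(ε), ε⁽²⁾ := μ₃(ε⁽¹⁾), ε⁽³⁾ := μ₄(ε⁽²⁾). Then the composite of tropical cluster X-mutations μ^T_{2,ε⁽³⁾} ∘ μ^T_{4,ε⁽²⁾} ∘ μ^T_{3,ε⁽¹⁾} ∘ μ^T_{1,ε} : ℚ¹² → ℚ¹² sends (x_1,…,x_12) to (x'_1,…,x'_12), where x'_1 = x_2 + [x_3,x_4,x_1]_+ − [x_1,x_2,x_3]_+, x'_2 = −x_1 − x_2 + [x_1]_+ − [x_3]_+, x'_3 = x_4 + [x_1,x_2,x_3]_+ − [x_3,x_4,x_1]_+, x'_4 = −x_3 − x_4 + [x_3]_+ − [x_1]_+, x'_5 = x_5 + [x_1]_+, x'_6 = x_6 + [x_1,x_2,x_3]_+ − [x_1]_+, x'_7 = x_7 + x_1 + x_2 + [x_3]_+ − [x_1,x_2,x_3]_+, x'_8 = x_8 − [−x_3]_+, x'_9 = x_9 + [x_3]_+, x'_10 = x_10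 + [x_3,x_4,x_1]_+ − [x_3]_+, x'_11 = x_11 + x_3 + x_4 + [x_1]_+ − [x_3,x_4,x_1]_+, x'_12 = x_12 − [−x_1]_+. -/
namespace SL3

/-- `[x]_+ := max(0,x)` for rationals. -/
def pos (x : ℚ) : ℚ := max 0 x

/-- `[x,y,z]_+ := max(0, x, x+y, x+y+z)` for rationals. -/
def pos3 (x y z : ℚ) : ℚ := max (max 0 x) (max (x + y) (x + y + z))

/-- Matrix mutation in direction `k`. -/
def mutate {I : Type*} [DecidableEq I] (ε : Matrix I I ℚ) (k : I) : Matrix I I ℚ :=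
  Matrix.of fun i j =>
    if i = k ∨ j = k then -ε i j
    else ε i j + (1 / 2) * (ε i k * |ε k j| + |ε i k| * ε k j)

/-- The tropical cluster X-mutation `μ^T_{k,ε}`. -/
def xMut {I : Type*} [DecidableEq I] (ε : Matrix I I ℚ) (k : I) (x : I → ℚ) : I → ℚ :=
  fun i => if i = k then -x k
    else x i + pos (-(ε i k)) * pos (x k) - pos (ε i k) * pos (-(x k))

/-- The tropical cluster A-mutation `μ^{aT}_{k,ε}`. -/
def aMut {I : Type*} [Fintype I] [DecidableEq I] (ε : Matrix I I ℚ) (k : I) (a : I → ℚ) :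
    I → ℚ :=
  fun i => if i = k then
      -a k + max (∑ j, pos (ε k j) * a j) (∑ j, pos (-(ε k j)) * a j)
    else a i

/-- Pairs `(a,b)` (0-indexed) with entry `1` in the sl3 quadrilateral exchange matrix. -/
def quadOnes : List (Fin 12 × Fin 12) :=
  [(0,3),(0,4),(1,0),(1,5),(1,7),(2,1),(2,8),(3,2),(3,9),(3,11),(4,1),(5,6),(6,1),(7,2),
   (8,3),(9,10),(10,3),(11,0)]

/-- Pairs `(a,b)` (0-indexed) with entry `1/2` in the sl3 quadrilateral exchange matrix. -/
def quadHalves : List (Fin 12 × Fin 12) := [(5,4),(7,6),(9,8),(11,10)]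

/-- The sl3 quadrilateral exchange matrix (0-indexed: paper's vertex `i` is index `i-1`). -/
def epsQuad : Matrix (Fin 12) (Fin 12) ℚ :=
  Matrix.of fun i j =>
    if (i, j) ∈ quadOnes then 1
    else if (j, i) ∈ quadOnes then -1
    else if (i, j) ∈ quadHalves then 1 / 2
    else if (j, i) ∈ quadHalves then -(1 / 2)
    else 0


lemma pos_zero' : pos 0 = 0 := by simp [pos]
lemma pos_one' : pos 1 = 1 := by simp [pos]
lemma pos_negone' : pos (-1) = 0 := by norm_num [pos]

lemma s1 (x : Fin 12 → ℚ) : xMut epsQuad 0 x =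
    ![-x 0, x 1 - pos (-(x 0)), x 2, x 3 + pos (x 0), x 4 + pos (x 0), x 5, x 6, x 7, x 8,
      x 9, x 10, x 11 - pos (-(x 0))] := by
  funext i; fin_cases i <;>
    norm_num (config := { decide := true }) [xMut, epsQuad, quadOnes, quadHalves,
      Matrix.of_apply, pos_zero', pos_one', pos_negone'] <;> try rfl

lemma s2 (y : Fin 12 → ℚ) : xMut (mutate epsQuad 0) 2 y =
    ![y 0, y 1 + pos (y 2), -y 2, y 3 - pos (-(y 2)), y 4, y 5, y 6, y 7 - pos (-(y 2)),
      y 8 + pos (y 2), y 9, y 10, y 11] := by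
  funext i; fin_cases i <;>
    norm_num (config := { decide := true }) [xMut, mutate, epsQuad, quadOnes, quadHalves,
      Matrix.of_apply, pos_zero', pos_one', pos_negone'] <;> try rfl

set_option maxHeartbeats 2000000 in
lemma s3 (z : Fin 12 → ℚ) : xMut (mutate (mutate epsQuad 0) 2) 3 z =
    ![z 0 + pos (z 3), z 1, z 2 - pos (-(z 3)), -z 3, z 4, z 5, z 6, z 7, z 8,
      z 9 + pos (z 3), z 10 - pos (-(z 3)), z 11] := by
  funext i; fin_cases i <;>
    norm_num (config := { decide := true }) [xMut, mutate, epsQuad, quadOnes, quadHalves,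
      Matrix.of_apply, pos_zero', pos_one', pos_negone'] <;> try rfl

set_option maxHeartbeats 2000000 in
lemma s4 (w : Fin 12 → ℚ) : xMut (mutate (mutate (mutate epsQuad 0) 2) 3) 1 w =
    ![w 0 - pos (-(w 1)), -w 1, w 2 + pos (w 1), w 3, w 4, w 5 + pos (w 1),
      w 6 - pos (-(w 1)), w 7, w 8, w 9, w 10, w 11] := by
  funext i; fin_cases i <;>
    norm_num (config := { decide := true }) [xMut, mutate, epsQuad, quadOnes, quadHalves,
      Matrix.of_apply, pos_zero', pos_one', pos_negone'] <;> try rfl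

lemma v0 (a0 a1 a2 a3 a4 a5 a6 a7 a8 a9 a10 a11 : ℚ) : ![a0,a1,a2,a3,a4,a5,a6,a7,a8,a9,a10,a11] (0 : Fin 12) = a0 := rfl
lemma vm0 (a0 a1 a2 a3 a4 a5 a6 a7 a8 a9 a10 a11 : ℚ) (h : (0:ℕ) < 12) : ![a0,a1,a2,a3,a4,a5,a6,a7,a8,a9,a10,a11] ⟨0, h⟩ = a0 := rfl
lemma v1 (a0 a1 a2 a3 a4 a5 a6 a7 a8 a9 a10 a11 : ℚ) : ![a0,a1,a2,a3,a4,a5,a6,a7,a8,a9,a10,a11] (1 : Fin 12) = a1 := rfl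
lemma vm1 (a0 a1 a2 a3 a4 a5 a6 a7 a8 a9 a10 a11 : ℚ) (h : (1:ℕ) < 12) : ![a0,a1,a2,a3,a4,a5,a6,a7,a8,a9,a10,a11] ⟨1, h⟩ = a1 := rfl
lemma v2 (a0 a1 a2 a3 a4 a5 a6 a7 a8 a9 a10 a11 : ℚ) : ![a0,a1,a2,a3,a4,a5,a6,a7,a8,a9,a10,a11] (2 : Fin 12) = a2 := rfl
lemma vm2 (a0 a1 a2 a3 a4 a5 a6 a7 a8 a9 a10 a11 : ℚ) (h : (2:ℕ) < 12) : ![a0,a1,a2,a3,a4,a5,a6,a7,a8,a9,a10,a11] ⟨2, h⟩ = a2 := rfl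
lemma v3 (a0 a1 a2 a3 a4 a5 a6 a7 a8 a9 a10 a11 : ℚ) : ![a0,a1,a2,a3,a4,a5,a6,a7,a8,a9,a10,a11] (3 : Fin 12) = a3 := rfl
lemma vm3 (a0 a1 a2 a3 a4 a5 a6 a7 a8 a9 a10 a11 : ℚ) (h : (3:ℕ) < 12) : ![a0,a1,a2,a3,a4,a5,a6,a7,a8,a9,a10,a11] ⟨3, h⟩ = a3 := rfl
lemma v4 (a0 a1 a2 a3 a4 a5 a6 a7 a8 a9 a10 a11 : ℚ) : ![a0,a1,a2,a3,a4,a5,a6,a7,a8,a9,a10,a11] (4 : Fin 12) = a4 := rfl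
lemma vm4 (a0 a1 a2 a3 a4 a5 a6 a7 a8 a9 a10 a11 : ℚ) (h : (4:ℕ) < 12) : ![a0,a1,a2,a3,a4,a5,a6,a7,a8,a9,a10,a11] ⟨4, h⟩ = a4 := rfl
lemma v5 (a0 a1 a2 a3 a4 a5 a6 a7 a8 a9 a10 a11 : ℚ) : ![a0,a1,a2,a3,a4,a5,a6,a7,a8,a9,a10,a11] (5 : Fin 12) = a5 := rfl
lemma vm5 (a0 a1 a2 a3 a4 a5 a6 a7 a8 a9 a10 a11 : ℚ) (h : (5:ℕ) < 12) : ![a0,a1,a2,a3,a4,a5,a6,a7,a8,a9,a10,a11] ⟨5, h⟩ = a5 := rfl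
lemma v6 (a0 a1 a2 a3 a4 a5 a6 a7 a8 a9 a10 a11 : ℚ) : ![a0,a1,a2,a3,a4,a5,a6,a7,a8,a9,a10,a11] (6 : Fin 12) = a6 := rfl
lemma vm6 (a0 a1 a2 a3 a4 a5 a6 a7 a8 a9 a10 a11 : ℚ) (h : (6:ℕ) < 12) : ![a0,a1,a2,a3,a4,a5,a6,a7,a8,a9,a10,a11] ⟨6, h⟩ = a6 := rfl
lemma v7 (a0 a1 a2 a3 a4 a5 a6 a7 a8 a9 a10 a11 : ℚ) : ![a0,a1,a2,a3,a4,a5,a6,a7,a8,a9,a10,a11] (7 : Fin 12) = a7 := rfl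
lemma vm7 (a0 a1 a2 a3 a4 a5 a6 a7 a8 a9 a10 a11 : ℚ) (h : (7:ℕ) < 12) : ![a0,a1,a2,a3,a4,a5,a6,a7,a8,a9,a10,a11] ⟨7, h⟩ = a7 := rfl
lemma v8 (a0 a1 a2 a3 a4 a5 a6 a7 a8 a9 a10 a11 : ℚ) : ![a0,a1,a2,a3,a4,a5,a6,a7,a8,a9,a10,a11] (8 : Fin 12) = a8 := rfl
lemma vm8 (a0 a1 a2 a3 a4 a5 a6 a7 a8 a9 a10 a11 : ℚ) (h : (8:ℕ) < 12) : ![a0,a1,a2,a3,a4,a5,a6,a7,a8,a9,a10,a11] ⟨8, h⟩ = a8 := rfl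
lemma v9 (a0 a1 a2 a3 a4 a5 a6 a7 a8 a9 a10 a11 : ℚ) : ![a0,a1,a2,a3,a4,a5,a6,a7,a8,a9,a10,a11] (9 : Fin 12) = a9 := rfl
lemma vm9 (a0 a1 a2 a3 a4 a5 a6 a7 a8 a9 a10 a11 : ℚ) (h : (9:ℕ) < 12) : ![a0,a1,a2,a3,a4,a5,a6,a7,a8,a9,a10,a11] ⟨9, h⟩ = a9 := rfl
lemma v10 (a0 a1 a2 a3 a4 a5 a6 a7 a8 a9 a10 a11 : ℚ) : ![a0,a1,a2,a3,a4,a5,a6,a7,a8,a9,a10,a11] (10 : Fin 12) = a10 := rfl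
lemma vm10 (a0 a1 a2 a3 a4 a5 a6 a7 a8 a9 a10 a11 : ℚ) (h : (10:ℕ) < 12) : ![a0,a1,a2,a3,a4,a5,a6,a7,a8,a9,a10,a11] ⟨10, h⟩ = a10 := rfl
lemma v11 (a0 a1 a2 a3 a4 a5 a6 a7 a8 a9 a10 a11 : ℚ) : ![a0,a1,a2,a3,a4,a5,a6,a7,a8,a9,a10,a11] (11 : Fin 12) = a11 := rfl
lemma vm11 (a0 a1 a2 a3 a4 a5 a6 a7 a8 a9 a10 a11 : ℚ) (h : (11:ℕ) < 12) : ![a0,a1,a2,a3,a4,a5,a6,a7,a8,a9,a10,a11] ⟨11, h⟩ = a11 := rfl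

set_option maxHeartbeats 4000000 in
/-- The composite of tropical cluster X-mutations `μ^T_{2} ∘ μ^T_{4} ∘ μ^T_{3} ∘ μ^T_{1}`
realizing the flip of the diagonal of the quadrilateral sends the sl3 shear coordinates
`(x_1,…,x_12)` to the explicit tuple `(x'_1,…,x'_12)` below. -/
theorem flip_tropical_formula (x : Fin 12 → ℚ) :
    xMut (mutate (mutate (mutate epsQuad 0) 2) 3) 1
      (xMut (mutate (mutate epsQuad 0) 2) 3
        (xMut (mutate epsQuad 0) 2
          (xMut epsQuad 0 x))) =
    ![x 1 + pos3 (x 2) (x 3) (x 0) - pos3 (x 0) (x 1) (x 2),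
      -x 0 - x 1 + pos (x 0) - pos (x 2),
      x 3 + pos3 (x 0) (x 1) (x 2) - pos3 (x 2) (x 3) (x 0),
      -x 2 - x 3 + pos (x 2) - pos (x 0),
      x 4 + pos (x 0),
      x 5 + pos3 (x 0) (x 1) (x 2) - pos (x 0),
      x 6 + x 0 + x 1 + pos (x 2) - pos3 (x 0) (x 1) (x 2),
      x 7 - pos (-(x 2)),
      x 8 + pos (x 2),
      x 9 + pos3 (x 2) (x 3) (x 0) - pos (x 2),
      x 10 + x 2 + x 3 + pos (x 0) - pos3 (x 2) (x 3) (x 0),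
      x 11 - pos (-(x 0))] := by
  rw [s1, s2, s3, s4]
  simp only [v0,v1,v2,v3,v4,v5,v6,v7,v8,v9,v10,v11]
  funext i
  fin_cases i <;>
    simp only [vm0,vm1,vm2,vm3,vm4,vm5,vm6,vm7,vm8,vm9,vm10,vm11] <;>
    (simp only [pos, pos3, max_def]; split_ifs <;> linarith)

end SL3
end

section
/- Let E, B, T be finite sets, L, R : E → T and t : B → T functions, and let Φ be the tropical Dynkin involution map associated with this data. Then Φ ∘ Φ = id. -/
namespace SL3

/-- The tropical Dynkin involution map on sl3 shear coordinates: `E` indexes interior edges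
(with coordinate pairs `(u_e, v_e)`), `B` indexes boundary intervals (with coordinate pairs
`(p_b, q_b)`), `T` indexes triangles (with face coordinates `w_s`); `L e` and `R e` are the
triangles to the left and right of the interior edge `e`, and `t b` is the triangle
containing the boundary interval `b`. -/
def Phi {E B T : Type*} (L R : E → T) (t : B → T) :
    (E → ℚ) × (E → ℚ) × (B → ℚ) × (B → ℚ) × (T → ℚ) →
      (E → ℚ) × (E → ℚ) × (B → ℚ) × (B → ℚ) × (T → ℚ) :=
  fun z =>
    (fun e => z.2.1 e + pos (z.2.2.2.2 (L e)) - pos (-(z.2.2.2.2 (R e))),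
     fun e => z.1 e + pos (z.2.2.2.2 (R e)) - pos (-(z.2.2.2.2 (L e))),
     fun b => z.2.2.2.1 b + pos (z.2.2.2.2 (t b)),
     fun b => z.2.2.1 b - pos (-(z.2.2.2.2 (t b))),
     fun s => -z.2.2.2.2 s)

/-- The tropical Dynkin involution map is an involution. -/
theorem Phi_involutive {E B T : Type*} [Fintype E] [Fintype B] [Fintype T]
    (L R : E → T) (t : B → T) :
    Phi L R t ∘ Phi L R t = id := by
  funext z
  simp only [Phi, Function.comp_apply, pos, neg_neg, id_eq]
  obtain ⟨u, v, p, q, w⟩ := z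
  refine Prod.ext ?_ (Prod.ext ?_ (Prod.ext ?_ (Prod.ext ?_ ?_))) <;> funext x <;> simp

end SL3
end

section
/- Let ε be the sl3 quadrilateral exchange matrix. Set ε⁽¹⁾ := μ₁(ε), ε⁽²⁾ := μ₃(ε⁽¹⁾), ε⁽³⁾ := μ₄(ε⁽²⁾), and also δ⁽¹⁾ := μ₃(ε), δ⁽²⁾ := μ₁(δ⁽¹⁾), δ⁽³⁾ := μ₂(δ⁽²⁾). Then the two composites of tropical cluster X-mutations μ^T_{2,ε⁽³⁾} ∘ μ^T_{4,ε⁽²⁾} ∘ μ^T_{3,ε⁽¹⁾} ∘ μ^T_{1,ε} and μ^T_{4,δ⁽³⁾} ∘ μ^T_{2,δ⁽²⁾} ∘ μ^T_{1,δ⁽¹⁾} ∘ μ^T_{3,ε} coincide as maps ℚ¹² → ℚ¹², and μ₄(μ₂(μ₁(μ₃(ε)))) = μ₂(μ₄(μ₃(μ₁(ε)))); that is, the two mutation paths realizing the flip of the diagonal of the quadrilateral yield the same tropical transformation and the same final exchange matrix. -/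
namespace SL3

private def mk (o h : List (Fin 12 × Fin 12)) : Matrix (Fin 12) (Fin 12) ℚ :=
  Matrix.of fun i j =>
    if (i, j) ∈ o then 1
    else if (j, i) ∈ o then -1
    else if (i, j) ∈ h then 1 / 2
    else if (j, i) ∈ h then -(1 / 2)
    else 0
private def mA1 : Matrix (Fin 12) (Fin 12) ℚ := mk [(0, 1),(0, 11),(1, 3),(1, 5),(1, 7),(2, 1),(2, 8),(3, 0),(3, 2),(3, 9),(4, 0),(5, 6),(6, 1),(7, 2),(8, 3),(9, 10),(10, 3),(11, 4)] [(5, 4),(7, 6),(9, 8),(11, 10)]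
private def mA2 : Matrix (Fin 12) (Fin 12) ℚ := mk [(0, 1),(0, 11),(1, 2),(1, 5),(2, 3),(2, 7),(3, 0),(3, 9),(4, 0),(5, 6),(6, 1),(7, 8),(8, 2),(9, 10),(10, 3),(11, 4)] [(5, 4),(7, 6),(9, 8),(11, 10)]
private def mA3 : Matrix (Fin 12) (Fin 12) ℚ := mk [(0, 1),(0, 3),(0, 11),(1, 2),(1, 5),(2, 0),(2, 7),(2, 9),(3, 2),(3, 10),(4, 0),(5, 6),(6, 1),(7, 8),(8, 2),(9, 3),(10, 0),(11, 4)] [(5, 4),(7, 6),(9, 8),(11, 10)]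
private def mB1 : Matrix (Fin 12) (Fin 12) ℚ := mk [(0, 3),(0, 4),(1, 0),(1, 2),(1, 5),(2, 3),(2, 7),(3, 1),(3, 9),(3, 11),(4, 1),(5, 6),(6, 1),(7, 8),(8, 2),(9, 10),(10, 3),(11, 0)] [(5, 4),(7, 6),(9, 8),(11, 10)]
private def mB2 : Matrix (Fin 12) (Fin 12) ℚ := mk [(0, 1),(0, 11),(1, 2),(1, 5),(2, 3),(2, 7),(3, 0),(3, 9),(4, 0),(5, 6),(6, 1),(7, 8),(8, 2),(9, 10),(10, 3),(11, 4)] [(5, 4),(7, 6),(9, 8),(11, 10)]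
private def mB3 : Matrix (Fin 12) (Fin 12) ℚ := mk [(0, 2),(0, 5),(0, 11),(1, 0),(1, 6),(2, 1),(2, 3),(2, 7),(3, 0),(3, 9),(4, 0),(5, 1),(6, 2),(7, 8),(8, 2),(9, 10),(10, 3),(11, 4)] [(5, 4),(7, 6),(9, 8),(11, 10)]
private def mF : Matrix (Fin 12) (Fin 12) ℚ := mk [(0, 3),(0, 5),(0, 11),(1, 0),(1, 6),(2, 1),(2, 7),(2, 9),(3, 2),(3, 10),(4, 0),(5, 1),(6, 2),(7, 8),(8, 2),(9, 3),(10, 0),(11, 4)] [(5, 4),(7, 6),(9, 8),(11, 10)]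

set_option maxHeartbeats 2000000

private lemma hA1 : mutate epsQuad 0 = mA1 := by
  have h : epsQuad = mk quadOnes quadHalves := rfl
  rw [h]; ext i j
  fin_cases i <;> fin_cases j <;>
    simp (config := { decide := true }) only [mutate, mk, mA1, quadOnes, quadHalves,
      Matrix.of_apply] <;> norm_num

private lemma hA2 : mutate mA1 2 = mA2 := by
  ext i j
  fin_cases i <;> fin_cases j <;>
    simp (config := { decide := true }) only [mutate, mk, mA1, mA2, Matrix.of_apply] <;> norm_num

private lemma hA3 : mutate mA2 3 = mA3 := by
  ext i j
  fin_cases i <;> fin_cases j <;>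
    simp (config := { decide := true }) only [mutate, mk, mA2, mA3, Matrix.of_apply] <;> norm_num

private lemma hA4 : mutate mA3 1 = mF := by
  ext i j
  fin_cases i <;> fin_cases j <;>
    simp (config := { decide := true }) only [mutate, mk, mA3, mF, Matrix.of_apply] <;> norm_num

private lemma hB1 : mutate epsQuad 2 = mB1 := by
  have h : epsQuad = mk quadOnes quadHalves := rfl
  rw [h]; ext i j
  fin_cases i <;> fin_cases j <;>
    simp (config := { decide := true }) only [mutate, mk, mB1, quadOnes, quadHalves,
      Matrix.of_apply] <;> norm_num

private lemma hB2 : mutate mB1 0 = mA2 := by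
  ext i j
  fin_cases i <;> fin_cases j <;>
    simp (config := { decide := true }) only [mutate, mk, mB1, mA2, Matrix.of_apply] <;> norm_num

private lemma hB3 : mutate mA2 1 = mB3 := by
  ext i j
  fin_cases i <;> fin_cases j <;>
    simp (config := { decide := true }) only [mutate, mk, mA2, mB3, Matrix.of_apply] <;> norm_num

private lemma hB4 : mutate mB3 3 = mF := by
  ext i j
  fin_cases i <;> fin_cases j <;>
    simp (config := { decide := true }) only [mutate, mk, mB3, mF, Matrix.of_apply] <;> norm_num

/-- The two mutation paths `(μ₁, μ₃, μ₄, μ₂)` and `(μ₃, μ₁, μ₂, μ₄)` realizing the flip of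
the diagonal of the quadrilateral yield the same composite of tropical cluster X-mutations
and the same final exchange matrix. -/
theorem flip_paths_agree :
    (∀ x : Fin 12 → ℚ,
      xMut (mutate (mutate (mutate epsQuad 0) 2) 3) 1
        (xMut (mutate (mutate epsQuad 0) 2) 3
          (xMut (mutate epsQuad 0) 2
            (xMut epsQuad 0 x))) =
      xMut (mutate (mutate (mutate epsQuad 2) 0) 1) 3
        (xMut (mutate (mutate epsQuad 2) 0) 1
          (xMut (mutate epsQuad 2) 0
            (xMut epsQuad 2 x)))) ∧
    mutate (mutate (mutate (mutate epsQuad 2) 0) 1) 3 =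
      mutate (mutate (mutate (mutate epsQuad 0) 2) 3) 1 := by
  constructor
  · intro x
    rw [hA1, hA2, hA3, hB1, hB2, hB3]
    funext i
    fin_cases i <;>
      (simp (config := { decide := true }) only [xMut, mk, mA1, mA2, mA3, mB1, mB3, epsQuad,
        quadOnes, quadHalves, Matrix.of_apply, pos]
       norm_num [max_def]) <;>
      (try split_ifs <;> linarith)
  · rw [hB1, hB2, hB3, hB4, hA1, hA2, hA3, hA4]

end SL3
end

section
/- Let ε be the sl3 quadrilateral exchange matrix, ε' the flipped sl3 quadrilateral exchange matrix, and m the quadrilateral Goncharov–Shen modification matrix. Set ε⁽¹⁾ := μ₁(ε), ε⁽²⁾ := μ₃(ε⁽¹⁾), ε⁽³⁾ := μ₄(ε⁽²⁾). Let F := μ^T_{2,ε⁽³⁾} ∘ μ^T_{4,ε⁽²⁾} ∘ μ^T_{3,ε⁽¹⁾} ∘ μ^T_{1,ε} be the composite of tropical X-mutations realizing the flip, and G := μ^{aT}_{2,ε⁽³⁾} ∘ μ^{aT}_{4,ε⁽²⁾} ∘ μ^{aT}_{3,ε⁽¹⁾} ∘ μ^{aT}_{1,ε} the corresponding composite of tropical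 A-mutations. Let P, P' : ℚ¹² → ℚ¹² be the linear maps P(a)_i = Σ_j (ε + m)_{ij} a_j and P'(a)_i = Σ_j (ε' + m)_{ij} a_j. Then F ∘ P = P' ∘ G. -/
/-!
Mutation at a vertex `k` commutes with the map `a ↦ (ε + m) a` as soon as `ε k k = 0` and `m`
vanishes on row and column `k`: the `k`-th coordinate of `(ε + m) a` is `U - V`, where `U` and `V`
are the two sums maximised by the A-mutation, and `[U - V]_+ = max U V - V`,
`[V - U]_+ = max U V - U` turn the X-mutation into the `max U V` of the A-mutation, while the
quadratic term of `μ_k(ε)` supplies the rest. The flip is four such mutations at unfrozen vertices,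
where `m` vanishes, and `μ₂ μ₄ μ₃ μ₁ (ε) = ε'`.
-/

namespace SL3

/-- Pairs `(a,b)` (0-indexed) with entry `1` in the flipped sl3 quadrilateral
exchange matrix. -/
def quadOnes' : List (Fin 12 × Fin 12) :=
  [(0,3),(0,5),(0,11),(1,0),(1,6),(2,1),(2,7),(2,9),(3,2),(3,10),(4,0),(5,1),(6,2),(7,8),
   (8,2),(9,3),(10,0),(11,4)]

/-- The flipped sl3 quadrilateral exchange matrix. -/
def epsQuad' : Matrix (Fin 12) (Fin 12) ℚ :=
  Matrix.of fun i j =>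
    if (i, j) ∈ quadOnes' then 1
    else if (j, i) ∈ quadOnes' then -1
    else if (i, j) ∈ quadHalves then 1 / 2
    else if (j, i) ∈ quadHalves then -(1 / 2)
    else 0

/-- The quadrilateral Goncharov–Shen modification matrix `m`. -/
def mQuad : Matrix (Fin 12) (Fin 12) ℚ :=
  Matrix.of fun i j =>
    if i = j ∧ 4 ≤ (i : ℕ) then -1
    else if (i, j) ∈ ([(4,5),(6,7),(8,9),(10,11)] : List (Fin 12 × Fin 12)) ∨
            (j, i) ∈ ([(4,5),(6,7),(8,9),(10,11)] : List (Fin 12 × Fin 12)) then 1 / 2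
    else 0

theorem pos_sub_pos_neg (x : ℚ) : pos x - pos (-x) = x := by
  rcases le_total 0 x with h | h <;> simp [pos, h]

theorem pos_add_pos_neg (x : ℚ) : pos x + pos (-x) = |x| := by
  rcases le_total 0 x with h | h <;> simp [pos, h, abs_of_nonneg, abs_of_nonpos]

theorem tropical_exchange (e u v : ℚ) :
    pos (-e) * pos (u - v) - pos e * pos (-(u - v)) =
      e * (u + v) / 2 + |e| * (u - v) / 2 - e * max u v := by
  rcases le_total 0 e with he | he <;> rcases le_total v u with huv | huv <;>
    simp [pos, he, huv, abs_of_nonneg, abs_of_nonpos, sub_nonneg.2, sub_nonpos.2] <;> ring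

section Mutation

open Matrix

variable {I : Type*}

theorem mutate_transpose [DecidableEq I] {ε : Matrix I I ℚ} (hε : εᵀ = -ε) (k : I) :
    (mutate ε k)ᵀ = -mutate ε k := by
  have h (i j : I) : ε j i = -ε i j := congrFun (congrFun hε i) j
  ext i j
  by_cases hij : i = k ∨ j = k
  · simp [mutate, hij, Or.comm.1 hij, h j i]
  · simp only [transpose_apply, Matrix.neg_apply, mutate, of_apply, if_neg hij,
      if_neg (mt Or.symm hij), h j i, h j k, h k i, abs_neg]
    ring

theorem apply_self_eq_zero_of_transpose_eq_neg {ε : Matrix I I ℚ} (hε : εᵀ = -ε) (k : I) :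
    ε k k = 0 := by
  have h : ε k k = -ε k k := congrFun (congrFun hε k) k
  linarith

theorem xMut_mulVec [Fintype I] [DecidableEq I] (ε m : Matrix I I ℚ) (k : I) (hε : ε k k = 0)
    (hm : ∀ i, m i k = 0 ∧ m k i = 0) (a : I → ℚ) :
    xMut ε k ((ε + m) *ᵥ a) = (mutate ε k + m) *ᵥ aMut ε k a := by
  set U := ∑ j, pos (ε k j) * a j
  set V := ∑ j, pos (-ε k j) * a j
  have hsub : ∑ j, ε k j * a j = U - V := by
    simp only [U, V, ← Finset.sum_sub_distrib, ← sub_mul, pos_sub_pos_neg]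
  have hadd : ∑ j, |ε k j| * a j = U + V := by
    simp only [U, V, ← Finset.sum_add_distrib, ← add_mul, pos_add_pos_neg]
  have hxk : ((ε + m) *ᵥ a) k = U - V := by
    simp [mulVec, dotProduct, (hm _).2, hsub]
  funext i
  by_cases hi : i = k
  · subst hi
    have hterm (j : I) : (mutate ε i + m) i j * aMut ε i a j = -(ε i j * a j) := by
      by_cases hj : j = i
      · subst hj; simp [mutate, hε, (hm _).1]
      · simp [mutate, aMut, hj, (hm _).2]
    rw [xMut, if_pos rfl, hxk]
    simp only [mulVec, dotProduct, hterm, Finset.sum_neg_distrib, hsub, neg_sub]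
  · -- only the `j = k` summand sees the new value `aMut ε k a k = -a k + max U V`
    have hdiff : ∑ j, ((mutate ε k + m) i j * aMut ε k a j - ((ε + m) i j * a j
        + ε i k / 2 * (|ε k j| * a j) + |ε i k| / 2 * (ε k j * a j))) = -(ε i k * max U V) := by
      rw [Finset.sum_eq_single k]
      · simp only [Matrix.add_apply, mutate, aMut, of_apply, or_true, ↓reduceIte, (hm _).1, hε,
          abs_zero, add_zero, zero_mul, mul_zero]
        ring
      · intro j _ hj
        simp only [Matrix.add_apply, mutate, aMut, of_apply, hi, hj, or_self, ↓reduceIte]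
        ring
      · simp
    rw [Finset.sum_sub_distrib, Finset.sum_add_distrib, Finset.sum_add_distrib, ← Finset.mul_sum,
      ← Finset.mul_sum, hsub, hadd] at hdiff
    rw [xMut, if_neg hi, hxk, add_sub_assoc, tropical_exchange]
    simp only [mulVec, dotProduct] at hdiff ⊢
    linarith

end Mutation

theorem epsQuad_transpose : epsQuad.transpose = -epsQuad := by decide +kernel

theorem epsQuad_mutate_flip :
    mutate (mutate (mutate (mutate epsQuad 0) 2) 3) 1 = epsQuad' := by decide +kernel

theorem mQuad_eq_zero_of_lt_four {i j : Fin 12} (hj : (j : ℕ) < 4) :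
    mQuad i j = 0 ∧ mQuad j i = 0 := by
  simp only [mQuad, Matrix.of_apply, Fin.ext_iff, List.mem_cons, List.not_mem_nil, Prod.mk.injEq,
    Fin.isValue, Fin.coe_ofNat_eq_mod, Nat.reduceMod, Nat.mod_succ, or_false]
  constructor <;> split_ifs <;> first | rfl | omega

/-- The Goncharov–Shen extended ensemble map intertwines the composite `G` of tropical
A-mutations and the composite `F` of tropical X-mutations realizing the flip of the
diagonal of the quadrilateral: `F ∘ P = P' ∘ G`. -/
theorem flip_ensemble_intertwines (a : Fin 12 → ℚ) :
    xMut (mutate (mutate (mutate epsQuad 0) 2) 3) 1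
      (xMut (mutate (mutate epsQuad 0) 2) 3
        (xMut (mutate epsQuad 0) 2
          (xMut epsQuad 0 (fun i => ∑ j, (epsQuad i j + mQuad i j) * a j)))) =
    fun i => ∑ j, (epsQuad' i j + mQuad i j) *
      (aMut (mutate (mutate (mutate epsQuad 0) 2) 3) 1
        (aMut (mutate (mutate epsQuad 0) 2) 3
          (aMut (mutate epsQuad 0) 2
            (aMut epsQuad 0 a))) j) := by
  have hskew₀ := epsQuad_transpose
  have hskew₁ := mutate_transpose hskew₀ 0
  have hskew₂ := mutate_transpose hskew₁ 2
  have hskew₃ := mutate_transpose hskew₂ 3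
  have hm (k : Fin 12) (hk : (k : ℕ) < 4) (i : Fin 12) : mQuad i k = 0 ∧ mQuad k i = 0 :=
    mQuad_eq_zero_of_lt_four hk
  change xMut _ 1 (xMut _ 3 (xMut _ 2 (xMut _ 0 ((epsQuad + mQuad).mulVec a)))) =
    (epsQuad' + mQuad).mulVec _
  rw [xMut_mulVec _ _ 0 (apply_self_eq_zero_of_transpose_eq_neg hskew₀ 0) (hm 0 (by decide)),
    xMut_mulVec _ _ 2 (apply_self_eq_zero_of_transpose_eq_neg hskew₁ 2) (hm 2 (by decide)),
    xMut_mulVec _ _ 3 (apply_self_eq_zero_of_transpose_eq_neg hskew₂ 3) (hm 3 (by decide)),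
    xMut_mulVec _ _ 1 (apply_self_eq_zero_of_transpose_eq_neg hskew₃ 1) (hm 1 (by decide)),
    epsQuad_mutate_flip]

end SL3
end
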